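/- arXiv:1606.06512 — 2 statements merged into one kernel-verified Lean document; each statement's English description precedes it below -/
import Mathlib

section
/- Tightness of the McCormick relaxation: if y ∈ [y⁻, y⁺] with y⁺ − y⁻ ≤ ε, z ∈ [z⁻, z⁺] with z⁺ − z⁻ ≤ ε, and x satisfies the four McCormick inequalities, then |x − y·z| ≤ ε². -/
/-- Tightness of the McCormick relaxation on boxes of width at most ε. -/
theorem stmt_3 (x y z yl yu zl zu ε : ℝ) (hε : 0 < ε)
    (hy : yl ≤ y ∧ y ≤ yu) (hz : zl ≤ z ∧ z ≤ zu)
    (hwy : yu - yl ≤ ε) (hwz : zu - zl ≤ ε)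
    (h1 : yl * z + zl * y - yl * zl ≤ x)
    (h2 : yu * z + zu * y - yu * zu ≤ x)
    (h3 : x ≤ yl * z + zu * y - yl * zu)
    (h4 : x ≤ zl * y + yu * z - zl * yu) :
    |x - y * z| ≤ ε ^ 2 := by
  obtain ⟨hy1, hy2⟩ := hy
  obtain ⟨hz1, hz2⟩ := hz
  rw [abs_le]
  constructor
  · nlinarith [mul_nonneg (sub_nonneg.2 hy1) (sub_nonneg.2 hz1)]
  · nlinarith [mul_nonneg (sub_nonneg.2 hy1) (sub_nonneg.2 hz2)]
end

section
/- For any point x in the McCormick relaxation of yz over the box, the range of possible x values for a fixed (y,z) is contained in an interval of length at most (y⁺ − y⁻)(z⁺ − z⁻); in particular, x − yz lies between −(y⁺−y⁻)(z⁺−z⁻) and (y⁺−y⁻)(z⁺−z⁻). -/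
/-- For any point in the McCormick relaxation of y·z over the box,
x − y·z lies between −(y⁺−y⁻)(z⁺−z⁻) and (y⁺−y⁻)(z⁺−z⁻). -/
theorem stmt_4 (x y z yl yu zl zu : ℝ)
    (hy : yl ≤ y ∧ y ≤ yu) (hz : zl ≤ z ∧ z ≤ zu)
    (h1 : yl * z + zl * y - yl * zl ≤ x)
    (h2 : yu * z + zu * y - yu * zu ≤ x)
    (h3 : x ≤ yl * z + zu * y - yl * zu)
    (h4 : x ≤ zl * y + yu * z - zl * yu) :
    -((yu - yl) * (zu - zl)) ≤ x - y * z ∧ x - y * z ≤ (yu - yl) * (zu - zl) := by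
  obtain ⟨hy1, hy2⟩ := hy
  obtain ⟨hz1, hz2⟩ := hz
  constructor
  · nlinarith [mul_nonneg (sub_nonneg.2 hy1) (sub_nonneg.2 hz1),
      mul_nonneg (sub_nonneg.2 hy2) (sub_nonneg.2 hz2),
      mul_nonneg (sub_nonneg.2 hy1) (sub_nonneg.2 hz2)]
  · nlinarith [mul_nonneg (sub_nonneg.2 hy1) (sub_nonneg.2 hz2),
      mul_nonneg (sub_nonneg.2 hy2) (sub_nonneg.2 hz1),
      mul_nonneg (sub_nonneg.2 hy1) (sub_nonneg.2 hz1)]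
end
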